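/- Suppose (C, A) and (C~, A~) are two output-stable, observable pairs (with state spaces X and X~ and common output space Y) such that C A^alpha A^{*beta} C* = C~ A~^alpha A~^{*beta} C~* for all words alpha, beta in F_d. Then there exists a unitary U : X -> X~ with C = C~ U and U A_j = A~_j U for j = 1, ..., d. -/

import Mathlib

open ContinuousLinearMap

noncomputable section

variable {X X' Y : Type*}
  [NormedAddCommGroup X] [InnerProductSpace ℂ X] [CompleteSpace X]
  [NormedAddCommGroup X'] [InnerProductSpace ℂ X'] [CompleteSpace X']
  [NormedAddCommGroup Y] [InnerProductSpace ℂ Y] [CompleteSpace Y]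

/-- `A^v` for a word `v` (a list of letters). -/
def wordProd {E : Type*} [NormedAddCommGroup E] [NormedSpace ℂ E]
    {d : ℕ} (A : Fin d → E →L[ℂ] E) (v : List (Fin d)) : E →L[ℂ] E :=
  (v.map A).prod

/-! The Gram data `C A^α A^{*β} C*` are exactly the inner products between the
vectors `A^{*β} C* y`, so `A^{*β} C* y ↦ A'^{*β} C'* y` is a well-defined isometry between the
spans of these vectors, which are dense by observability. Its extension `U` is unitary, and
`U C* = C'*`, `U A_j* = A'_j* U` on a dense set; taking adjoints gives `C = C' U` and
`U A_j = A'_j U`. -/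

open scoped InnerProductSpace

namespace LinearIsometryEquiv

variable {𝕜 E E' F : Type*} [RCLike 𝕜]
  [NormedAddCommGroup E] [InnerProductSpace 𝕜 E] [CompleteSpace E]
  [NormedAddCommGroup E'] [InnerProductSpace 𝕜 E'] [CompleteSpace E']
  [NormedAddCommGroup F] [InnerProductSpace 𝕜 F] [CompleteSpace F]

theorem apply_eq_apply_of_adjoint (U : E ≃ₗᵢ[𝕜] E') {T : E →L[𝕜] F} {T' : E' →L[𝕜] F}
    (h : ∀ y, U (adjoint T y) = adjoint T' y) (x : E) : T x = T' (U x) :=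
  ext_inner_left 𝕜 fun y => by
    rw [← adjoint_inner_left, ← U.inner_map_map, h, adjoint_inner_left]

theorem apply_comm_of_adjoint (U : E ≃ₗᵢ[𝕜] E') {T : E →L[𝕜] E} {T' : E' →L[𝕜] E'}
    (h : ∀ v, U (adjoint T v) = adjoint T' (U v)) (x : E) : U (T x) = T' (U x) :=
  ext_inner_left 𝕜 fun w => by
    obtain ⟨v, rfl⟩ := U.surjective w
    rw [U.inner_map_map, ← adjoint_inner_left, ← U.inner_map_map, h, adjoint_inner_left]

end LinearIsometryEquiv

section wordProd

variable {E : Type*} [NormedAddCommGroup E] [NormedSpace ℂ E] {d : ℕ} (A : Fin d → E →L[ℂ] E)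

theorem wordProd_nil : wordProd A [] = 1 := rfl

theorem wordProd_append_singleton (v : List (Fin d)) (j : Fin d) :
    wordProd A (v ++ [j]) = wordProd A v ∘L A j := by
  simp [wordProd, List.prod_append, mul_def]

end wordProd

section obsAdjoint

variable {d : ℕ}

/-- The adjoint of the observability operator `x ↦ (C A^β x)_β`, restricted to finitely
supported sequences. -/
def obsAdjoint (A : Fin d → X →L[ℂ] X) (C : X →L[ℂ] Y) : (List (Fin d) →₀ Y) →ₗ[ℂ] X :=
  Finsupp.lsum ℂ fun β => (adjoint (wordProd A β) ∘L adjoint C).toLinearMap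

variable (A : Fin d → X →L[ℂ] X) (C : X →L[ℂ] Y)

theorem obsAdjoint_single (β : List (Fin d)) (y : Y) :
    obsAdjoint A C (Finsupp.single β y) = adjoint (wordProd A β) (adjoint C y) := by
  simp [obsAdjoint]

theorem obsAdjoint_single_nil (y : Y) : obsAdjoint A C (Finsupp.single [] y) = adjoint C y := by
  rw [obsAdjoint_single, wordProd_nil, adjoint_one, one_apply_eq_self]

theorem adjoint_apply_obsAdjoint (j : Fin d) (f : List (Fin d) →₀ Y) :
    adjoint (A j) (obsAdjoint A C f) = obsAdjoint A C (f.mapDomain (· ++ [j])) := by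
  induction f using Finsupp.induction_linear with
  | zero => simp
  | add f₁ f₂ h₁ h₂ => simp only [Finsupp.mapDomain_add, map_add, h₁, h₂]
  | single β y =>
    rw [Finsupp.mapDomain_single, obsAdjoint_single, obsAdjoint_single,
      wordProd_append_singleton, adjoint_comp, comp_apply]

theorem denseRange_obsAdjoint
    (hobs : ∀ x : X, (∀ v : List (Fin d), C (wordProd A v x) = 0) → x = 0) :
    DenseRange (obsAdjoint A C) := by
  suffices h : (LinearMap.range (obsAdjoint A C))ᗮ = ⊥ by
    rw [DenseRange, ← LinearMap.coe_range, Submodule.dense_iff_topologicalClosure_eq_top]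
    exact Submodule.topologicalClosure_eq_top_iff.mpr h
  refine (Submodule.eq_bot_iff _).mpr fun x hx => hobs x fun v => ?_
  have h := (Submodule.mem_orthogonal _ x).mp hx
    (obsAdjoint A C (Finsupp.single v (C (wordProd A v x)))) (LinearMap.mem_range_self _ _)
  rw [obsAdjoint_single, adjoint_inner_left, adjoint_inner_left] at h
  exact inner_self_eq_zero.mp h

variable {A C} {A' : Fin d → X' →L[ℂ] X'} {C' : X' →L[ℂ] Y}

theorem inner_obsAdjoint_eq
    (hker : ∀ α β : List (Fin d),
      C ∘L wordProd A α ∘L adjoint (wordProd A β) ∘L adjoint C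
        = C' ∘L wordProd A' α ∘L adjoint (wordProd A' β) ∘L adjoint C')
    (f g : List (Fin d) →₀ Y) :
    ⟪obsAdjoint A C f, obsAdjoint A C g⟫_ℂ = ⟪obsAdjoint A' C' f, obsAdjoint A' C' g⟫_ℂ := by
  induction f using Finsupp.induction_linear with
  | zero => simp
  | add f₁ f₂ h₁ h₂ => simp only [map_add, inner_add_left, h₁, h₂]
  | single β y =>
    induction g using Finsupp.induction_linear with
    | zero => simp
    | add g₁ g₂ h₁ h₂ => simp only [map_add, inner_add_right, h₁, h₂]
    | single α y' =>
      simp only [obsAdjoint_single, adjoint_inner_left]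
      simpa using congrArg (fun T => ⟪y, T y'⟫_ℂ) (hker β α)

theorem norm_obsAdjoint_eq
    (hker : ∀ α β : List (Fin d),
      C ∘L wordProd A α ∘L adjoint (wordProd A β) ∘L adjoint C
        = C' ∘L wordProd A' α ∘L adjoint (wordProd A' β) ∘L adjoint C')
    (f : List (Fin d) →₀ Y) : ‖obsAdjoint A' C' f‖ = ‖obsAdjoint A C f‖ := by
  rw [@norm_eq_sqrt_re_inner ℂ, @norm_eq_sqrt_re_inner ℂ, inner_obsAdjoint_eq hker]

end obsAdjoint

theorem stmt16_general {d : ℕ}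
    (A : Fin d → X →L[ℂ] X) (A' : Fin d → X' →L[ℂ] X')
    (C : X →L[ℂ] Y) (C' : X' →L[ℂ] Y)
    (hobs : ∀ x : X, (∀ v : List (Fin d), C (wordProd A v x) = 0) → x = 0)
    (hobs' : ∀ x : X', (∀ v : List (Fin d), C' (wordProd A' v x) = 0) → x = 0)
    (hker : ∀ α β : List (Fin d),
      C ∘L wordProd A α ∘L adjoint (wordProd A β) ∘L adjoint C
        = C' ∘L wordProd A' α ∘L adjoint (wordProd A' β) ∘L adjoint C') :
    ∃ U : X ≃ₗᵢ[ℂ] X', (∀ x : X, C x = C' (U x)) ∧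
      ∀ (j : Fin d) (x : X), U (A j x) = A' j (U x) := by
  have hdense := denseRange_obsAdjoint A C hobs
  let U : X ≃ₗᵢ[ℂ] X' := (LinearEquiv.refl ℂ _).extendOfIsometry _ _ hdense
    (denseRange_obsAdjoint A' C' hobs') (norm_obsAdjoint_eq hker)
  have hU : ∀ f, U (obsAdjoint A C f) = obsAdjoint A' C' f :=
    LinearEquiv.extendOfIsometry_eq _ _ _ _ _ _
  refine ⟨U, U.apply_eq_apply_of_adjoint fun y => ?_, fun j => U.apply_comm_of_adjoint ?_⟩
  · rw [← obsAdjoint_single_nil, hU, obsAdjoint_single_nil]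
  · have hcomm : ∀ f, U (adjoint (A j) (obsAdjoint A C f))
        = adjoint (A' j) (U (obsAdjoint A C f)) := fun f => by
      rw [adjoint_apply_obsAdjoint, hU, hU, adjoint_apply_obsAdjoint]
    exact congrFun (hdense.equalizer (by fun_prop) (by fun_prop) (funext hcomm))

/-- Two output-stable, observable pairs realizing the same data
`C A^α A^{*β} C* = C' A'^α A'^{*β} C'*` (for all words α, β) are unitarily
equivalent. -/
theorem stmt16 {d : ℕ}
    (A : Fin d → X →L[ℂ] X) (A' : Fin d → X' →L[ℂ] X')
    (C : X →L[ℂ] Y) (C' : X' →L[ℂ] Y)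
    (hstable : ∀ x : X, Summable fun v : List (Fin d) => ‖C (wordProd A v x)‖ ^ 2)
    (hstable' : ∀ x : X', Summable fun v : List (Fin d) => ‖C' (wordProd A' v x)‖ ^ 2)
    (hobs : ∀ x : X, (∀ v : List (Fin d), C (wordProd A v x) = 0) → x = 0)
    (hobs' : ∀ x : X', (∀ v : List (Fin d), C' (wordProd A' v x) = 0) → x = 0)
    (hker : ∀ α β : List (Fin d),
      C ∘L wordProd A α ∘L adjoint (wordProd A β) ∘L adjoint C
        = C' ∘L wordProd A' α ∘L adjoint (wordProd A' β) ∘L adjoint C') :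
    ∃ U : X ≃ₗᵢ[ℂ] X', (∀ x : X, C x = C' (U x)) ∧
      ∀ (j : Fin d) (x : X), U (A j x) = A' j (U x) :=
  stmt16_general A A' C C' hobs hobs' hker

end
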